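/- arXiv:1705.09333 — 2 statements merged into one kernel-verified Lean document; each statement's English description precedes it below -/
import Mathlib

section
/- For all τ, z in the stated domain, the following infinite product identity holds: −2y ∏_{n≥1} (1−q^n)² (1−y⁻²q^{n−1}) (1−ωy⁻²q^{n−1}) (1−ω²y⁻²q^{n−1}) (1−y²q^n) (1−ωy²q^n) (1−ω²y²q^n) / [ (1+y⁻¹q^{n−1})² (1+ωy⁻¹q^{n−1}) (1+ω²y⁻¹q^{n−1}) (1+yq^n)² (1+ωyq^n) (1+ω²yq^n) ] = −2i · η(τ)³ θ₁(3τ,6z) / ( θ₂(τ,z) θ₂(3τ,3z) ). (This is the identity establishing that the graded trace attached to the class 6A of the umbral group G⁽⁴⁾ equals the umbral meromorphic Jacobi form ψ⁽⁴⁾_{6A}.) -/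
/-!
Since `(1 - x)(1 - ωx)(1 - ω²x) = 1 - x³` and `(1 + x)(1 + ωx)(1 + ω²x) = 1 + x³`, the `n`-th
factor of the product collapses to
`(1 - qⁿ⁺¹)² (1 - y⁻⁶q³ⁿ)(1 - y⁶q³ⁿ⁺³) / ((1 + y⁻¹qⁿ)(1 + y⁻³q³ⁿ)(1 + yqⁿ⁺¹)(1 + y³q³ⁿ⁺³))`.
Multiplying numerator and denominator by `(1 - qⁿ⁺¹)(1 - q³ⁿ⁺³)` exhibits it as the `n`-th factor
of `η(τ)³ θ₁(3τ,6z) / (θ₂(τ,z) θ₂(3τ,3z))` stripped of its exponential prefactors, which combine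
to `y`. All products converge absolutely since `|q| < 1`, and the two `θ₂` products do not vanish
because `|y⁻¹| < 1` and `|yq| < 1`, so the product of the quotients is the quotient of the products.
-/

open Complex

/-- Dedekind eta function via its infinite product:
    `η(τ) = e^{πiτ/12} ∏_{n≥1} (1 − e^{2πinτ})`. -/
noncomputable def Eta (τ : ℂ) : ℂ :=
  Complex.exp (Real.pi * Complex.I * τ / 12) *
    ∏' n : ℕ, (1 - Complex.exp (2 * Real.pi * Complex.I * ((n : ℂ) + 1) * τ))

/-- Jacobi theta function `θ₁` via its triple product expansion. -/
noncomputable def Theta1 (τ w : ℂ) : ℂ :=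
  -Complex.I * Complex.exp (Real.pi * Complex.I * τ / 4) *
    Complex.exp (Real.pi * Complex.I * w) *
    ∏' n : ℕ,
      ((1 - Complex.exp (-(2 * Real.pi * Complex.I * w)) *
            Complex.exp (2 * Real.pi * Complex.I * (n : ℂ) * τ)) *
       (1 - Complex.exp (2 * Real.pi * Complex.I * w) *
            Complex.exp (2 * Real.pi * Complex.I * ((n : ℂ) + 1) * τ)) *
       (1 - Complex.exp (2 * Real.pi * Complex.I * ((n : ℂ) + 1) * τ)))

/-- Jacobi theta function `θ₂` via its triple product expansion. -/
noncomputable def Theta2 (τ w : ℂ) : ℂ :=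
  Complex.exp (Real.pi * Complex.I * τ / 4) *
    Complex.exp (Real.pi * Complex.I * w) *
    ∏' n : ℕ,
      ((1 + Complex.exp (-(2 * Real.pi * Complex.I * w)) *
            Complex.exp (2 * Real.pi * Complex.I * (n : ℂ) * τ)) *
       (1 + Complex.exp (2 * Real.pi * Complex.I * w) *
            Complex.exp (2 * Real.pi * Complex.I * ((n : ℂ) + 1) * τ)) *
       (1 - Complex.exp (2 * Real.pi * Complex.I * ((n : ℂ) + 1) * τ)))

/-- A primitive cube root of unity, `ω = e^{2πi/3}`. -/
noncomputable def omega3 : ℂ := Complex.exp (2 * Real.pi * Complex.I / 3)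

open Real

section ProductAtoms

variable {𝕜 : Type*} [NormedField 𝕜] {q : 𝕜}

lemma summable_norm_mul_pow (c : 𝕜) (hq : ‖q‖ < 1) : Summable fun n : ℕ => ‖c * q ^ n‖ := by
  simpa only [norm_mul, norm_pow] using
    (summable_geometric_of_lt_one (norm_nonneg q) hq).mul_left ‖c‖

lemma multipliable_one_add_mul_pow [CompleteSpace 𝕜] (c : 𝕜) (hq : ‖q‖ < 1) :
    Multipliable fun n : ℕ => 1 + c * q ^ n :=
  multipliable_one_add_of_summable (summable_norm_mul_pow c hq)

lemma one_add_mul_pow_ne_zero {c : 𝕜} (hc : ‖c‖ < 1) (hq : ‖q‖ ≤ 1) (n : ℕ) :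
    1 + c * q ^ n ≠ 0 := by
  intro h
  have hlt : ‖c * q ^ n‖ < 1 := by
    rw [norm_mul, norm_pow]
    exact (mul_le_of_le_one_right (norm_nonneg c) (pow_le_one₀ (norm_nonneg q) hq)).trans_lt hc
  rw [eq_neg_of_add_eq_zero_right h, norm_neg, norm_one] at hlt
  exact hlt.false

lemma tprod_one_add_mul_pow_ne_zero [CompleteSpace 𝕜] {c : 𝕜} (hc : ‖c‖ < 1) (hq : ‖q‖ < 1) :
    ∏' n : ℕ, (1 + c * q ^ n) ≠ 0 :=
  tprod_one_add_ne_zero_of_summable (one_add_mul_pow_ne_zero hc hq.le)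
    (summable_norm_mul_pow c hq)

lemma one_sub_pow_ne_zero (hq : ‖q‖ < 1) {n : ℕ} (hn : n ≠ 0) : 1 - q ^ n ≠ 0 := by
  intro h
  have := congrArg norm (sub_eq_zero.mp h).symm
  rw [norm_pow, norm_one] at this
  exact (pow_lt_one₀ (norm_nonneg q) hq hn).ne this

lemma multipliable_one_sub_pow_succ [CompleteSpace 𝕜] (hq : ‖q‖ < 1) :
    Multipliable fun n : ℕ => 1 - q ^ (n + 1) :=
  (multipliable_one_add_mul_pow (-q) hq).congr fun n => by ring

end ProductAtoms

lemma tprod_pow_mul_div_mul {ι K : Type*} [Field K] [TopologicalSpace K]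
    [IsTopologicalDivisionRing K] [T2Space K] {f g h k : ι → K} (hf : Multipliable f)
    (hg : Multipliable g) (hh : Multipliable h) (hk : Multipliable k) (hh0 : ∏' i, h i ≠ 0)
    (hk0 : ∏' i, k i ≠ 0) (m : ℕ) :
    ∏' i, f i ^ m * g i / (h i * k i) =
      (∏' i, f i) ^ m * (∏' i, g i) / ((∏' i, h i) * ∏' i, k i) := by
  rw [Multipliable.tprod_div₀ ((hf.pow m).mul hg) (hh.mul hk)
      (by rw [hh.tprod_mul hk]; exact mul_ne_zero hh0 hk0),
    (hf.pow m).tprod_mul hg, hh.tprod_mul hk, hf.tprod_pow]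

/-- The `n`-th factor of the triple products of `θ₁` (`s = -1`) and `θ₂` (`s = 1`) in the
variables `q = e^{2πiτ}`, `u = e^{2πiw}`. -/
def tripleProductFactor {K : Type*} [Field K] (s q u : K) (n : ℕ) : K :=
  (1 + s * u⁻¹ * q ^ n) * (1 + s * u * q ^ (n + 1)) * (1 - q ^ (n + 1))

lemma tripleProductFactor_eq {K : Type*} [Field K] (s q u : K) :
    tripleProductFactor s q u =
      fun n => (1 + s * u⁻¹ * q ^ n) * (1 + s * u * q * q ^ n) * (1 + -q * q ^ n) := by
  funext n
  rw [tripleProductFactor]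
  ring

section TripleProduct

variable {𝕜 : Type*} [NormedField 𝕜]

lemma multipliable_tripleProductFactor [CompleteSpace 𝕜] (s u : 𝕜) {q : 𝕜} (hq : ‖q‖ < 1) :
    Multipliable (tripleProductFactor s q u) := by
  rw [tripleProductFactor_eq]
  exact ((multipliable_one_add_mul_pow _ hq).mul (multipliable_one_add_mul_pow _ hq)).mul
    (multipliable_one_add_mul_pow _ hq)

lemma tprod_tripleProductFactor_ne_zero [CompleteSpace 𝕜] {s q u : 𝕜} (hq : ‖q‖ < 1)
    (hu : ‖s * u⁻¹‖ < 1) (huq : ‖s * u * q‖ < 1) : ∏' n, tripleProductFactor s q u n ≠ 0 := by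
  have hq' : ‖-q‖ < 1 := by rwa [norm_neg]
  rw [tripleProductFactor_eq, Multipliable.tprod_mul
      ((multipliable_one_add_mul_pow _ hq).mul (multipliable_one_add_mul_pow _ hq))
      (multipliable_one_add_mul_pow _ hq),
    Multipliable.tprod_mul (multipliable_one_add_mul_pow _ hq) (multipliable_one_add_mul_pow _ hq)]
  exact mul_ne_zero (mul_ne_zero (tprod_one_add_mul_pow_ne_zero hu hq)
    (tprod_one_add_mul_pow_ne_zero huq hq)) (tprod_one_add_mul_pow_ne_zero hq' hq)

end TripleProduct

section CubeRoots

lemma one_sub_mul_one_sub_mul_one_sub {R : Type*} [CommRing R] {ω : R}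
    (hω : ω ^ 2 + ω + 1 = 0) (x : R) :
    (1 - x) * (1 - ω * x) * (1 - ω ^ 2 * x) = 1 - x ^ 3 := by
  linear_combination (-x + ω * x ^ 2 + (1 - ω) * x ^ 3) * hω

lemma one_add_mul_one_add_mul_one_add {R : Type*} [CommRing R] {ω : R}
    (hω : ω ^ 2 + ω + 1 = 0) (x : R) :
    (1 + x) * (1 + ω * x) * (1 + ω ^ 2 * x) = 1 + x ^ 3 := by
  linear_combination (x + ω * x ^ 2 + (ω - 1) * x ^ 3) * hω

lemma cubeRoot_factor_div_eq {K : Type*} [Field K] {ω : K} (hω : ω ^ 2 + ω + 1 = 0)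
    (a b c d : K) {e : K} (he : 1 - e ≠ 0) (he3 : 1 - e ^ 3 ≠ 0) :
    (1 - e) ^ 2 * (1 - a) * (1 - ω * a) * (1 - ω ^ 2 * a) * (1 - b) * (1 - ω * b) *
        (1 - ω ^ 2 * b) /
      ((1 + c) ^ 2 * (1 + ω * c) * (1 + ω ^ 2 * c) * (1 + d) ^ 2 * (1 + ω * d) *
        (1 + ω ^ 2 * d)) =
    (1 - e) ^ 3 * ((1 - a ^ 3) * (1 - b ^ 3) * (1 - e ^ 3)) /
      (((1 + c) * (1 + d) * (1 - e)) * ((1 + c ^ 3) * (1 + d ^ 3) * (1 - e ^ 3))) := by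
  rw [← mul_div_mul_right _ _ (mul_ne_zero he he3)]
  congr 1
  · linear_combination (1 - e) ^ 3 * (1 - e ^ 3) * ((1 - a) * (1 - ω * a) * (1 - ω ^ 2 * a) *
      (one_sub_mul_one_sub_mul_one_sub hω b) + (1 - b ^ 3) * (one_sub_mul_one_sub_mul_one_sub hω a))
  · linear_combination (1 - e) * (1 - e ^ 3) * (1 + c) * (1 + d) *
      ((1 + c) * (1 + ω * c) * (1 + ω ^ 2 * c) * (one_add_mul_one_add_mul_one_add hω d) +
        (1 + d ^ 3) * (one_add_mul_one_add_mul_one_add hω c))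

lemma sixA_factor_eq {𝕜 : Type*} [NormedField 𝕜] {ω q : 𝕜} (hω : ω ^ 2 + ω + 1 = 0)
    (hq : ‖q‖ < 1) (y : 𝕜) (n : ℕ) :
    (1 - q ^ (n + 1)) ^ 2 * (1 - y⁻¹ ^ 2 * q ^ n) * (1 - ω * y⁻¹ ^ 2 * q ^ n) *
          (1 - ω ^ 2 * y⁻¹ ^ 2 * q ^ n) * (1 - y ^ 2 * q ^ (n + 1)) *
          (1 - ω * y ^ 2 * q ^ (n + 1)) * (1 - ω ^ 2 * y ^ 2 * q ^ (n + 1)) /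
        ((1 + y⁻¹ * q ^ n) ^ 2 * (1 + ω * y⁻¹ * q ^ n) *
          (1 + ω ^ 2 * y⁻¹ * q ^ n) * (1 + y * q ^ (n + 1)) ^ 2 *
          (1 + ω * y * q ^ (n + 1)) * (1 + ω ^ 2 * y * q ^ (n + 1))) =
      (1 - q ^ (n + 1)) ^ 3 * tripleProductFactor (-1) (q ^ 3) (y ^ 6) n /
        (tripleProductFactor 1 q y n * tripleProductFactor 1 (q ^ 3) (y ^ 3) n) := by
  have key := cubeRoot_factor_div_eq hω (y⁻¹ ^ 2 * q ^ n) (y ^ 2 * q ^ (n + 1)) (y⁻¹ * q ^ n)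
    (y * q ^ (n + 1)) (e := q ^ (n + 1)) (one_sub_pow_ne_zero hq n.succ_ne_zero)
    (by rw [← pow_mul]; exact one_sub_pow_ne_zero hq (by omega))
  simp only [tripleProductFactor]
  convert key using 2 <;> ring

end CubeRoots

lemma omega3_sq_add_omega3_add_one : omega3 ^ 2 + omega3 + 1 = 0 := by
  have h := (Complex.isPrimitiveRoot_exp 3 (by norm_num)).geom_sum_eq_zero (by norm_num)
  rw [Finset.sum_range_succ, Finset.sum_range_succ, Finset.sum_range_one] at h
  rw [omega3]
  push_cast at h
  linear_combination h

section QVariables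

variable {τ w q u : ℂ}

lemma norm_cexp_two_pi_I_mul_lt_one (hτ : 0 < τ.im) : ‖cexp (2 * π * I * τ)‖ < 1 := by
  rw [norm_exp, Real.exp_lt_one_iff]
  simpa using mul_pos two_pi_pos hτ

lemma cexp_two_pi_I_mul_natCast_mul (hq : cexp (2 * π * I * τ) = q) (n : ℕ) :
    cexp (2 * π * I * (n * τ)) = q ^ n := by
  rw [← hq, ← Complex.exp_nat_mul]
  ring_nf

lemma eta_eq (hq : cexp (2 * π * I * τ) = q) :
    Eta τ = cexp (π * I * τ / 12) * ∏' n : ℕ, (1 - q ^ (n + 1)) := by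
  rw [Eta]
  congr 1
  refine tprod_congr fun n => ?_
  rw [← cexp_two_pi_I_mul_natCast_mul hq (n + 1)]
  push_cast
  ring_nf

lemma theta1_eq (hq : cexp (2 * π * I * τ) = q) (hu : cexp (2 * π * I * w) = u) :
    Theta1 τ w = -I * cexp (π * I * τ / 4) * cexp (π * I * w) *
      ∏' n : ℕ, tripleProductFactor (-1) q u n := by
  rw [Theta1]
  congr 1
  refine tprod_congr fun n => ?_
  rw [tripleProductFactor, Complex.exp_neg, hu, ← cexp_two_pi_I_mul_natCast_mul hq n,
    ← cexp_two_pi_I_mul_natCast_mul hq (n + 1)]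
  push_cast
  ring_nf

lemma theta2_eq (hq : cexp (2 * π * I * τ) = q) (hu : cexp (2 * π * I * w) = u) :
    Theta2 τ w = cexp (π * I * τ / 4) * cexp (π * I * w) *
      ∏' n : ℕ, tripleProductFactor 1 q u n := by
  rw [Theta2]
  congr 1
  refine tprod_congr fun n => ?_
  rw [tripleProductFactor, Complex.exp_neg, hu, ← cexp_two_pi_I_mul_natCast_mul hq n,
    ← cexp_two_pi_I_mul_natCast_mul hq (n + 1)]
  push_cast
  ring_nf

lemma tprod_tripleProductFactor_one_ne_zero (hq : cexp (2 * π * I * τ) = q)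
    (hu : cexp (2 * π * I * w) = u) (hw : 0 < -w.im) (hwτ : -w.im < τ.im) :
    ∏' n, tripleProductFactor 1 q u n ≠ 0 := by
  refine tprod_tripleProductFactor_ne_zero (hq ▸ norm_cexp_two_pi_I_mul_lt_one (by linarith)) ?_ ?_
  · rw [one_mul, ← hu, ← Complex.exp_neg, ← mul_neg]
    exact norm_cexp_two_pi_I_mul_lt_one (by rwa [neg_im])
  · rw [one_mul, ← hu, ← hq, ← Complex.exp_add, ← mul_add]
    exact norm_cexp_two_pi_I_mul_lt_one (by rw [add_im]; linarith)

end QVariables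

lemma cexp_prefactor_eq (τ z : ℂ) :
    cexp (π * I * τ / 12) ^ 3 * (cexp (π * I * (3 * τ) / 4) * cexp (π * I * (6 * z))) /
        (cexp (π * I * τ / 4) * cexp (π * I * z) *
          (cexp (π * I * (3 * τ) / 4) * cexp (π * I * (3 * z)))) =
      cexp (2 * π * I * z) := by
  rw [div_eq_iff (by simp only [ne_eq, mul_eq_zero, Complex.exp_ne_zero, or_self,
    not_false_eq_true])]
  simp only [← Complex.exp_nat_mul, ← Complex.exp_add]
  congr 1
  push_cast
  ring

lemma eta_cube_mul_theta1_div_theta2_mul_theta2 {τ z q y : ℂ} (hq : cexp (2 * π * I * τ) = q)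
    (hy : cexp (2 * π * I * z) = y) :
    -2 * I * Eta τ ^ 3 * Theta1 (3 * τ) (6 * z) / (Theta2 τ z * Theta2 (3 * τ) (3 * z)) =
      -2 * y * ((∏' n : ℕ, (1 - q ^ (n + 1))) ^ 3 *
        (∏' n, tripleProductFactor (-1) (q ^ 3) (y ^ 6) n) /
        ((∏' n, tripleProductFactor 1 q y n) * ∏' n, tripleProductFactor 1 (q ^ 3) (y ^ 3) n)) := by
  have hq3 : cexp (2 * π * I * (3 * τ)) = q ^ 3 := by
    exact_mod_cast cexp_two_pi_I_mul_natCast_mul hq 3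
  have hy3 : cexp (2 * π * I * (3 * z)) = y ^ 3 := by
    exact_mod_cast cexp_two_pi_I_mul_natCast_mul hy 3
  have hy6 : cexp (2 * π * I * (6 * z)) = y ^ 6 := by
    exact_mod_cast cexp_two_pi_I_mul_natCast_mul hy 6
  rw [eta_eq hq, theta1_eq hq3 hy6, theta2_eq hq hy, theta2_eq hq3 hy3]
  generalize ∏' n : ℕ, (1 - q ^ (n + 1)) = E
  generalize ∏' n, tripleProductFactor (-1) (q ^ 3) (y ^ 6) n = T₁
  generalize ∏' n, tripleProductFactor 1 q y n = T₂
  generalize ∏' n, tripleProductFactor 1 (q ^ 3) (y ^ 3) n = T₂'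
  rw [← hy, ← cexp_prefactor_eq τ z]
  ring_nf
  rw [I_sq]
  ring

/-- Umbral moonshine product identity for the class 6A of G⁽⁴⁾: the graded trace equals ψ⁽⁴⁾_{6A}. -/
theorem stmt_12 (τ z : ℂ) (h1 : 0 < -z.im) (h2 : -z.im < τ.im)
    (q y : ℂ)
    (hq : q = Complex.exp (2 * Real.pi * Complex.I * τ))
    (hy : y = Complex.exp (2 * Real.pi * Complex.I * z)) :
    -2 * y * (∏' n : ℕ,
      ((1 - q ^ (n + 1)) ^ 2 * (1 - y⁻¹ ^ 2 * q ^ n) * (1 - omega3 * y⁻¹ ^ 2 * q ^ n) *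
          (1 - omega3 ^ 2 * y⁻¹ ^ 2 * q ^ n) * (1 - y ^ 2 * q ^ (n + 1)) *
          (1 - omega3 * y ^ 2 * q ^ (n + 1)) * (1 - omega3 ^ 2 * y ^ 2 * q ^ (n + 1)) /
        ((1 + y⁻¹ * q ^ n) ^ 2 * (1 + omega3 * y⁻¹ * q ^ n) *
          (1 + omega3 ^ 2 * y⁻¹ * q ^ n) * (1 + y * q ^ (n + 1)) ^ 2 *
          (1 + omega3 * y * q ^ (n + 1)) * (1 + omega3 ^ 2 * y * q ^ (n + 1)))))
    = -2 * Complex.I * (Eta τ) ^ 3 * Theta1 (3 * τ) (6 * z) /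
        (Theta2 τ z * Theta2 (3 * τ) (3 * z)) := by
  have hq_lt : ‖q‖ < 1 := hq ▸ norm_cexp_two_pi_I_mul_lt_one (by linarith)
  have hq3_lt : ‖q ^ 3‖ < 1 := by
    rw [norm_pow]; exact pow_lt_one₀ (norm_nonneg q) hq_lt (by norm_num)
  have hq3 : cexp (2 * π * I * (3 * τ)) = q ^ 3 := by
    exact_mod_cast cexp_two_pi_I_mul_natCast_mul hq.symm 3
  have hy3 : cexp (2 * π * I * (3 * z)) = y ^ 3 := by
    exact_mod_cast cexp_two_pi_I_mul_natCast_mul hy.symm 3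
  have im_three_mul : ∀ w : ℂ, (3 * w).im = 3 * w.im := fun w => by simp
  rw [eta_cube_mul_theta1_div_theta2_mul_theta2 hq.symm hy.symm,
    ← tprod_pow_mul_div_mul (multipliable_one_sub_pow_succ hq_lt)
      (multipliable_tripleProductFactor _ _ hq3_lt) (multipliable_tripleProductFactor _ _ hq_lt)
      (multipliable_tripleProductFactor _ _ hq3_lt)
      (tprod_tripleProductFactor_one_ne_zero hq.symm hy.symm h1 h2)
      (tprod_tripleProductFactor_one_ne_zero hq3 hy3 (by rw [im_three_mul]; linarith)
        (by rw [im_three_mul, im_three_mul]; linarith))]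
  exact congrArg _ (tprod_congr fun n => sixA_factor_eq omega3_sq_add_omega3_add_one hq_lt y n)
end

section
/- For all τ, z in the stated domain, the following identity holds: −y ∏_{n≥1} (1−q^n)² (1+y⁻²q^{n−1}) (1+y²q^n) (1+iy⁻³q^{n−1}) (1−iy³q^n) / [ (1+iy⁻¹q^{n−1}) (1−iyq^n) (1−iy⁻¹q^{n−1})² (1+iyq^n)² ] − y ∏_{n≥1} (1−q^n)² (1+y⁻²q^{n−1}) (1+y²q^n) (1−iy⁻³q^{n−1}) (1+iy³q^n) / [ (1−iy⁻¹q^{n−1}) (1+iyq^n) (1+iy⁻¹q^{n−1})² (1−iyq^n)² ] = −i ( η(2τ)² θ₂(τ,2z) / ( η(τ) θ₂(2τ,2z)² ) ) · [ θ₁(τ,z+1/4) θ₁(τ,3z+1/4) − θ₁(τ,z−1/4) θ₁(τ,3z−1/4) ]. (This is the identity establishing that the graded trace attached to the classes 4A and 4B of the umbral group G⁽⁵⁾ equals the umbral meromorphic Jacobi form ψ⁽⁵⁾_{4AB}.) -/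
/-!
All factors on both sides are q-Pochhammer symbols `(a; q)_∞ = ∏ (1 - a qⁿ)`: the eta and theta
functions through their triple products, and each product on the left because a quotient of
convergent products whose denominator does not vanish converges to the quotient of the limits
(so no case distinction is needed when a numerator factor vanishes).
For `ε = ±i` the factors `(−y⁻²; q²)_∞ (−y²q²; q²)_∞` of `θ₂(2τ, 2z)` split as
`(εy⁻¹; q)_∞ (−εy⁻¹; q)_∞ (εyq; q)_∞ (−εyq; q)_∞`, since `1 + y⁻²q²ⁿ = (1 − εy⁻¹qⁿ)(1 + εy⁻¹qⁿ)`.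
After this splitting the term with `ε` on the left is `−ε` times the quotient of eta and theta
functions times `θ₁(τ, z + c) θ₁(τ, 3z + c)` with `e^{2πic} = ε`, the powers of `e^{πiτ/12}`
cancelling.
-/

open Complex

open Real

lemma norm_sq_lt_one {a : ℂ} (ha : ‖a‖ < 1) : ‖a ^ 2‖ < 1 := by
  rw [norm_pow]; exact pow_lt_one₀ (norm_nonneg a) ha two_ne_zero

noncomputable def qPochhammer (a q : ℂ) : ℂ := ∏' n : ℕ, (1 - a * q ^ n)

section qPochhammer

variable {a q : ℂ}

lemma summable_norm_neg_mul_pow (a : ℂ) (hq : ‖q‖ < 1) :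
    Summable fun n : ℕ ↦ ‖-(a * q ^ n)‖ := by
  simpa [norm_mul, norm_pow] using (summable_geometric_of_lt_one (norm_nonneg q) hq).mul_left ‖a‖

lemma hasProd_qPochhammer (a : ℂ) (hq : ‖q‖ < 1) :
    HasProd (fun n : ℕ ↦ 1 - a * q ^ n) (qPochhammer a q) := by
  have h := (multipliable_one_add_of_summable (summable_norm_neg_mul_pow a hq)).hasProd
  simp only [← sub_eq_add_neg] at h
  exact h

lemma qPochhammer_ne_zero (ha : ‖a‖ < 1) (hq : ‖q‖ < 1) : qPochhammer a q ≠ 0 := by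
  have hfactor (n : ℕ) : 1 + -(a * q ^ n) ≠ 0 := by
    have hlt : ‖a * q ^ n‖ < 1 := by
      rw [norm_mul, norm_pow]
      exact (mul_le_of_le_one_right (norm_nonneg a) (pow_le_one₀ (norm_nonneg q) hq.le)).trans_lt ha
    rw [← sub_eq_add_neg, sub_ne_zero]
    rintro h
    rw [← h, norm_one] at hlt
    exact lt_irrefl 1 hlt
  simpa [qPochhammer, sub_eq_add_neg] using
    tprod_one_add_ne_zero_of_summable hfactor (summable_norm_neg_mul_pow a hq)

lemma qPochhammer_sq_sq (a : ℂ) (hq : ‖q‖ < 1) :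
    qPochhammer (a ^ 2) (q ^ 2) = qPochhammer a q * qPochhammer (-a) q := by
  refine (hasProd_qPochhammer (a ^ 2) (norm_sq_lt_one hq)).unique ?_
  convert (hasProd_qPochhammer a hq).mul (hasProd_qPochhammer (-a) hq) using 1
  funext n
  ring

end qPochhammer

lemma norm_cexp_two_pi_I_mul_lt_one_s18 {w : ℂ} (hw : 0 < w.im) : ‖cexp (2 * π * I * w)‖ < 1 := by
  rw [Complex.norm_exp, Real.exp_lt_one_iff]
  have : (2 * π * I * w).re = -(2 * π * w.im) := by simp [Complex.mul_re, Complex.mul_im]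
  rw [this]
  nlinarith [Real.pi_pos]

lemma cexp_two_pi_I_nat_mul (n : ℕ) (τ : ℂ) :
    cexp (2 * π * I * n * τ) = cexp (2 * π * I * τ) ^ n := by
  rw [← Complex.exp_nat_mul]; ring_nf

lemma cexp_two_pi_I_succ_mul (n : ℕ) (τ : ℂ) :
    cexp (2 * π * I * ((n : ℂ) + 1) * τ) = cexp (2 * π * I * τ) ^ (n + 1) := by
  rw [← cexp_two_pi_I_nat_mul]; push_cast; rfl

section ProductFormulas

variable {τ w q x : ℂ}

lemma Eta_eq_qPochhammer (hq : q = cexp (2 * π * I * τ)) (hq1 : ‖q‖ < 1) :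
    Eta τ = cexp (π * I * τ / 12) * qPochhammer q q := by
  rw [Eta, ← (hasProd_qPochhammer q hq1).tprod_eq]
  simp only [cexp_two_pi_I_succ_mul, ← hq, pow_succ']

lemma Theta1_eq_qPochhammer (hq : q = cexp (2 * π * I * τ)) (hx : x = cexp (2 * π * I * w))
    (hq1 : ‖q‖ < 1) :
    Theta1 τ w = -I * cexp (π * I * τ / 4) * cexp (π * I * w) *
      (qPochhammer x⁻¹ q * qPochhammer (x * q) q * qPochhammer q q) := by
  have h := ((hasProd_qPochhammer x⁻¹ hq1).mul (hasProd_qPochhammer (x * q) hq1)).mul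
    (hasProd_qPochhammer q hq1)
  rw [Theta1, ← h.tprod_eq]
  refine congrArg _ (tprod_congr fun n ↦ ?_)
  rw [Complex.exp_neg, cexp_two_pi_I_nat_mul, cexp_two_pi_I_succ_mul, ← hq, ← hx]
  ring

lemma Theta2_eq_qPochhammer (hq : q = cexp (2 * π * I * τ)) (hx : x = cexp (2 * π * I * w))
    (hq1 : ‖q‖ < 1) :
    Theta2 τ w = cexp (π * I * τ / 4) * cexp (π * I * w) *
      (qPochhammer (-x⁻¹) q * qPochhammer (-(x * q)) q * qPochhammer q q) := by
  have h := ((hasProd_qPochhammer (-x⁻¹) hq1).mul (hasProd_qPochhammer (-(x * q)) hq1)).mul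
    (hasProd_qPochhammer q hq1)
  rw [Theta2, ← h.tprod_eq]
  refine congrArg _ (tprod_congr fun n ↦ ?_)
  rw [Complex.exp_neg, cexp_two_pi_I_nat_mul, cexp_two_pi_I_succ_mul, ← hq, ← hx]
  ring

end ProductFormulas

lemma hasProd_graded_trace {q y ε : ℂ} (hq : ‖q‖ < 1) (hy : ‖y⁻¹‖ < 1) (hyq : ‖y * q‖ < 1)
    (hε : ‖ε‖ = 1) :
    HasProd (fun n : ℕ ↦
      (1 - q ^ (n + 1)) ^ 2 * (1 + y⁻¹ ^ 2 * q ^ n) * (1 + y ^ 2 * q ^ (n + 1)) *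
          (1 + ε * y⁻¹ ^ 3 * q ^ n) * (1 - ε * y ^ 3 * q ^ (n + 1)) /
        ((1 + ε * y⁻¹ * q ^ n) * (1 - ε * y * q ^ (n + 1)) *
          (1 - ε * y⁻¹ * q ^ n) ^ 2 * (1 + ε * y * q ^ (n + 1)) ^ 2))
      (qPochhammer q q ^ 2 * qPochhammer (-y⁻¹ ^ 2) q * qPochhammer (-(y ^ 2 * q)) q *
          qPochhammer (-(ε * y⁻¹ ^ 3)) q * qPochhammer (ε * y ^ 3 * q) q /
        (qPochhammer (-(ε * y⁻¹)) q * qPochhammer (ε * y * q) q *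
          qPochhammer (ε * y⁻¹) q ^ 2 * qPochhammer (-(ε * y * q)) q ^ 2)) := by
  have hεy : ‖ε * y⁻¹‖ < 1 := by rwa [norm_mul, hε, one_mul]
  have hεyq : ‖ε * y * q‖ < 1 := by rwa [mul_assoc, norm_mul, hε, one_mul]
  have hP (a : ℂ) := hasProd_qPochhammer a hq
  have hnum := (((((hP q).pow 2).mul (hP (-y⁻¹ ^ 2))).mul (hP (-(y ^ 2 * q)))).mul
    (hP (-(ε * y⁻¹ ^ 3)))).mul (hP (ε * y ^ 3 * q))
  have hden := ((((hP (-(ε * y⁻¹))).mul (hP (ε * y * q))).mul ((hP (ε * y⁻¹)).pow 2)).mul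
    ((hP (-(ε * y * q))).pow 2))
  have hden0 : qPochhammer (-(ε * y⁻¹)) q * qPochhammer (ε * y * q) q *
      qPochhammer (ε * y⁻¹) q ^ 2 * qPochhammer (-(ε * y * q)) q ^ 2 ≠ 0 := by
    have h₁ := qPochhammer_ne_zero hεy hq
    have h₂ := qPochhammer_ne_zero hεyq hq
    have h₃ := qPochhammer_ne_zero (a := -(ε * y⁻¹)) (by rwa [norm_neg]) hq
    have h₄ := qPochhammer_ne_zero (a := -(ε * y * q)) (by rwa [norm_neg]) hq
    positivity
  exact (hnum.div₀ hden hden0).congr_fun fun n ↦ by ring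

section ThetaQuotient

variable {τ z c q y ε : ℂ}

lemma Theta1_mul_Theta1_eq_qPochhammer (hq : q = cexp (2 * π * I * τ))
    (hy : y = cexp (2 * π * I * z)) (hε : ε = cexp (2 * π * I * c)) (hε2 : ε ^ 2 = -1)
    (hq1 : ‖q‖ < 1) :
    Theta1 τ (z + c) * Theta1 τ (3 * z + c) = -(ε * y ^ 2) * cexp (π * I * τ / 12) ^ 6 *
      ((qPochhammer (-(ε * y⁻¹)) q * qPochhammer (ε * y * q) q * qPochhammer q q) *
        (qPochhammer (-(ε * y⁻¹ ^ 3)) q * qPochhammer (ε * y ^ 3 * q) q * qPochhammer q q)) := by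
  have hε_inv : ε⁻¹ = -ε := by
    rw [inv_eq_of_mul_eq_one_right]; linear_combination -hε2
  have hx₁ : ε * y = cexp (2 * π * I * (z + c)) := by
    rw [hε, hy, ← Complex.exp_add]; ring_nf
  have hx₃ : ε * y ^ 3 = cexp (2 * π * I * (3 * z + c)) := by
    rw [hε, hy, ← Complex.exp_nat_mul, ← Complex.exp_add]; ring_nf
  have he : cexp (π * I * (z + c)) * cexp (π * I * (3 * z + c)) = ε * y ^ 2 := by
    rw [hε, hy, ← Complex.exp_nat_mul, ← Complex.exp_add, ← Complex.exp_add]; ring_nf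
  have hinv₁ : (ε * y)⁻¹ = -(ε * y⁻¹) := by rw [mul_inv, hε_inv, neg_mul]
  have hinv₃ : (ε * y ^ 3)⁻¹ = -(ε * y⁻¹ ^ 3) := by rw [mul_inv, hε_inv, inv_pow, neg_mul]
  have hC : cexp (π * I * τ / 4) = cexp (π * I * τ / 12) ^ 3 := by
    rw [← Complex.exp_nat_mul]; ring_nf
  rw [Theta1_eq_qPochhammer hq hx₁ hq1, Theta1_eq_qPochhammer hq hx₃ hq1, hinv₁, hinv₃, hC, ← he]
  ring_nf
  rw [I_sq]
  ring

lemma Eta_Theta2_quotient_eq (hq : q = cexp (2 * π * I * τ)) (hy : y = cexp (2 * π * I * z))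
    (hq1 : ‖q‖ < 1) (hy1 : ‖y⁻¹‖ < 1) (hyq : ‖y * q‖ < 1) :
    Eta (2 * τ) ^ 2 * Theta2 τ (2 * z) / (Eta τ * Theta2 (2 * τ) (2 * z) ^ 2) =
      qPochhammer (-y⁻¹ ^ 2) q * qPochhammer (-(y ^ 2 * q)) q /
        (y * cexp (π * I * τ / 12) ^ 6 *
          (qPochhammer (-y⁻¹ ^ 2) (q ^ 2) * qPochhammer (-(y ^ 2 * q ^ 2)) (q ^ 2)) ^ 2) := by
  have hq₂ : q ^ 2 = cexp (2 * π * I * (2 * τ)) := by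
    rw [hq, ← Complex.exp_nat_mul]; ring_nf
  have hy₂ : y ^ 2 = cexp (2 * π * I * (2 * z)) := by
    rw [hy, ← Complex.exp_nat_mul]; ring_nf
  have hq1₂ := norm_sq_lt_one hq1
  have hπy : cexp (π * I * (2 * z)) = y := by rw [hy]; ring_nf
  have hC₂ : cexp (π * I * (2 * τ) / 12) = cexp (π * I * τ / 12) ^ 2 := by
    rw [← Complex.exp_nat_mul]; ring_nf
  have hC₃ : cexp (π * I * τ / 4) = cexp (π * I * τ / 12) ^ 3 := by
    rw [← Complex.exp_nat_mul]; ring_nf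
  have hC₆ : cexp (π * I * (2 * τ) / 4) = cexp (π * I * τ / 12) ^ 6 := by
    rw [← Complex.exp_nat_mul]; ring_nf
  have hy0 : y ≠ 0 := hy ▸ Complex.exp_ne_zero _
  have hP := qPochhammer_ne_zero hq1 hq1
  have hP₂ := qPochhammer_ne_zero hq1₂ hq1₂
  have hD : qPochhammer (-y⁻¹ ^ 2) (q ^ 2) ≠ 0 :=
    qPochhammer_ne_zero (by rw [norm_neg]; exact norm_sq_lt_one hy1) hq1₂
  have hE : qPochhammer (-(y ^ 2 * q ^ 2)) (q ^ 2) ≠ 0 :=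
    qPochhammer_ne_zero (by rw [norm_neg, ← mul_pow]; exact norm_sq_lt_one hyq) hq1₂
  rw [Eta_eq_qPochhammer hq hq1, Eta_eq_qPochhammer hq₂ hq1₂, Theta2_eq_qPochhammer hq hy₂ hq1,
    Theta2_eq_qPochhammer hq₂ hy₂ hq1₂, hπy, hC₂, hC₃, hC₆, ← inv_pow]
  field_simp

end ThetaQuotient

lemma norm_eq_one_of_sq_eq_neg_one {ε : ℂ} (hε : ε ^ 2 = -1) : ‖ε‖ = 1 := by
  have h := congrArg norm hε
  rw [norm_pow, norm_neg, norm_one] at h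
  exact (pow_eq_one_iff_of_nonneg (norm_nonneg ε) two_ne_zero).mp h

lemma neg_mul_tprod_eq_theta_quotient {τ z c q y ε : ℂ} (hz : 0 < -z.im) (hzτ : -z.im < τ.im)
    (hq : q = cexp (2 * π * I * τ)) (hy : y = cexp (2 * π * I * z))
    (hε : ε = cexp (2 * π * I * c)) (hε2 : ε ^ 2 = -1) :
    -y * ∏' n : ℕ,
      ((1 - q ^ (n + 1)) ^ 2 * (1 + y⁻¹ ^ 2 * q ^ n) * (1 + y ^ 2 * q ^ (n + 1)) *
          (1 + ε * y⁻¹ ^ 3 * q ^ n) * (1 - ε * y ^ 3 * q ^ (n + 1)) /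
        ((1 + ε * y⁻¹ * q ^ n) * (1 - ε * y * q ^ (n + 1)) *
          (1 - ε * y⁻¹ * q ^ n) ^ 2 * (1 + ε * y * q ^ (n + 1)) ^ 2)) =
      -ε * (Eta (2 * τ) ^ 2 * Theta2 τ (2 * z) / (Eta τ * Theta2 (2 * τ) (2 * z) ^ 2)) *
        (Theta1 τ (z + c) * Theta1 τ (3 * z + c)) := by
  have hq1 : ‖q‖ < 1 := hq ▸ norm_cexp_two_pi_I_mul_lt_one_s18 (by linarith)
  have hy1 : ‖y⁻¹‖ < 1 := by
    rw [hy, ← Complex.exp_neg, ← mul_neg]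
    exact norm_cexp_two_pi_I_mul_lt_one_s18 (by simpa using hz)
  have hyq : ‖y * q‖ < 1 := by
    rw [hy, hq, ← Complex.exp_add, ← mul_add]
    exact norm_cexp_two_pi_I_mul_lt_one_s18 (by simp only [add_im]; linarith)
  have hεn := norm_eq_one_of_sq_eq_neg_one hε2
  have hεy : ‖ε * y⁻¹‖ < 1 := by rwa [norm_mul, hεn, one_mul]
  have hεyq : ‖ε * y * q‖ < 1 := by rwa [mul_assoc, norm_mul, hεn, one_mul]
  have hy0 : y ≠ 0 := hy ▸ Complex.exp_ne_zero _
  have h₁ := qPochhammer_ne_zero hεy hq1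
  have h₂ := qPochhammer_ne_zero hεyq hq1
  have h₃ := qPochhammer_ne_zero (a := -(ε * y⁻¹)) (by rwa [norm_neg]) hq1
  have h₄ := qPochhammer_ne_zero (a := -(ε * y * q)) (by rwa [norm_neg]) hq1
  have hC := Complex.exp_ne_zero (π * I * τ / 12)
  rw [(hasProd_graded_trace hq1 hy1 hyq hεn).tprod_eq, Eta_Theta2_quotient_eq hq hy hq1 hy1 hyq,
    Theta1_mul_Theta1_eq_qPochhammer hq hy hε hε2 hq1,
    show -y⁻¹ ^ 2 = (ε * y⁻¹) ^ 2 by linear_combination (-y⁻¹ ^ 2) * hε2,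
    show -(y ^ 2 * q ^ 2) = (ε * y * q) ^ 2 by linear_combination (-(y * q) ^ 2) * hε2,
    qPochhammer_sq_sq _ hq1, qPochhammer_sq_sq _ hq1]
  rw [show ∀ X Z Y : ℂ, -ε * X * (-(ε * y ^ 2) * Z * Y) = ε ^ 2 * (y ^ 2 * X * Z * Y) from
    fun X Z Y ↦ by ring, hε2]
  field_simp

/-- Umbral moonshine identity for the classes 4A, 4B of G⁽⁵⁾: the graded trace equals ψ⁽⁵⁾_{4AB}. -/
theorem stmt_18 (τ z : ℂ) (h1 : 0 < -z.im) (h2 : -z.im < τ.im)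
    (q y : ℂ)
    (hq : q = Complex.exp (2 * Real.pi * Complex.I * τ))
    (hy : y = Complex.exp (2 * Real.pi * Complex.I * z)) :
    -y * (∏' n : ℕ,
      ((1 - q ^ (n + 1)) ^ 2 * (1 + y⁻¹ ^ 2 * q ^ n) * (1 + y ^ 2 * q ^ (n + 1)) *
          (1 + Complex.I * y⁻¹ ^ 3 * q ^ n) * (1 - Complex.I * y ^ 3 * q ^ (n + 1)) /
        ((1 + Complex.I * y⁻¹ * q ^ n) * (1 - Complex.I * y * q ^ (n + 1)) *
          (1 - Complex.I * y⁻¹ * q ^ n) ^ 2 * (1 + Complex.I * y * q ^ (n + 1)) ^ 2)))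
    - y * (∏' n : ℕ,
      ((1 - q ^ (n + 1)) ^ 2 * (1 + y⁻¹ ^ 2 * q ^ n) * (1 + y ^ 2 * q ^ (n + 1)) *
          (1 - Complex.I * y⁻¹ ^ 3 * q ^ n) * (1 + Complex.I * y ^ 3 * q ^ (n + 1)) /
        ((1 - Complex.I * y⁻¹ * q ^ n) * (1 + Complex.I * y * q ^ (n + 1)) *
          (1 + Complex.I * y⁻¹ * q ^ n) ^ 2 * (1 - Complex.I * y * q ^ (n + 1)) ^ 2)))
    = -Complex.I * (Eta (2 * τ) ^ 2 * Theta2 τ (2 * z) /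
        (Eta τ * (Theta2 (2 * τ) (2 * z)) ^ 2)) *
        (Theta1 τ (z + 1 / 4) * Theta1 τ (3 * z + 1 / 4) -
          Theta1 τ (z - 1 / 4) * Theta1 τ (3 * z - 1 / 4)) := by
  have hI : cexp (2 * π * I * (1 / 4)) = I := by
    rw [show 2 * π * I * (1 / 4) = π / 2 * I by ring, Complex.exp_pi_div_two_mul_I]
  have hnegI : cexp (2 * π * I * -(1 / 4)) = -I := by
    rw [mul_neg, Complex.exp_neg, hI, Complex.inv_I]
  have hplus := neg_mul_tprod_eq_theta_quotient h1 h2 hq hy hI.symm I_sq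
  have hminus := neg_mul_tprod_eq_theta_quotient h1 h2 hq hy hnegI.symm (by rw [neg_sq, I_sq])
  simp only [neg_mul, sub_neg_eq_add, ← sub_eq_add_neg] at hplus hminus ⊢
  linear_combination hplus + hminus
end
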